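/- arXiv:2512.00429 — 5 statements merged into one kernel-verified Lean document; each statement's English description precedes it below -/
import Mathlib

section
/- On the path graph P₄ with vertices v₁,v₂,v₃,v₄, vertex modules m_{vⱼ}ℤ and edge labels r₁, r₂, r₃ ∈ ℤ, there exists an extending generalized spline (f₁,f₂,f₃,f₄) with first coordinate f₁ equal to a prescribed integer a if and only if a ≡ 0 mod lcm(m_{v₁}, gcd(r₁, lcm(m_{v₂}, gcd(r₂, lcm(m_{v₃}, gcd(r₃, m_{v₄})))))). -/
/-- Key step: an integer `a` has a "neighbor" `f` divisible by `M` with `r ∣ a - f`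
iff `gcd r M ∣ a`. -/
lemma key_step (r M a : ℤ) : (∃ f : ℤ, M ∣ f ∧ r ∣ a - f) ↔ gcd r M ∣ a := by
  constructor
  · rintro ⟨f, hM, hr⟩
    have h1 : gcd r M ∣ a - f := dvd_trans (gcd_dvd_left r M) hr
    have h2 : gcd r M ∣ f := dvd_trans (gcd_dvd_right r M) hM
    simpa using dvd_add h1 h2
  · rintro ⟨k, hk⟩
    have hg : (Int.gcd r M : ℤ) = gcd r M := Int.coe_gcd r M
    have hb := Int.gcd_eq_gcd_ab r M
    refine ⟨M * (Int.gcdB r M * k), dvd_mul_right _ _, Int.gcdA r M * k, ?_⟩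
    have : a = (r * Int.gcdA r M + M * Int.gcdB r M) * k := by
      rw [← hb, hg, ← hk]
    rw [this]; ring

/-- On the path `P₄` with vertex modules `mⱼℤ` and edge labels `r₁,r₂,r₃`, an integer `a`
is the first coordinate of a spline iff
`lcm(m₁, gcd(r₁, lcm(m₂, gcd(r₂, lcm(m₃, gcd(r₃, m₄)))))) ∣ a`. -/
theorem stmt_3 (m₁ m₂ m₃ m₄ r₁ r₂ r₃ a : ℤ) :
    (∃ f₁ f₂ f₃ f₄ : ℤ, f₁ = a ∧ m₁ ∣ f₁ ∧ m₂ ∣ f₂ ∧ m₃ ∣ f₃ ∧ m₄ ∣ f₄ ∧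
      r₁ ∣ f₁ - f₂ ∧ r₂ ∣ f₂ - f₃ ∧ r₃ ∣ f₃ - f₄) ↔
    lcm m₁ (gcd r₁ (lcm m₂ (gcd r₂ (lcm m₃ (gcd r₃ m₄))))) ∣ a := by
  constructor
  · rintro ⟨f₁, f₂, f₃, f₄, rfl, h1, h2, h3, h4, e1, e2, e3⟩
    refine lcm_dvd h1 ?_
    rw [← key_step]
    refine ⟨f₂, ?_, e1⟩
    refine lcm_dvd h2 ?_
    rw [← key_step]
    refine ⟨f₃, ?_, e2⟩
    refine lcm_dvd h3 ?_
    rw [← key_step]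
    exact ⟨f₄, h4, e3⟩
  · intro h
    have h1 : m₁ ∣ a := dvd_trans (dvd_lcm_left _ _) h
    have h2 : gcd r₁ (lcm m₂ (gcd r₂ (lcm m₃ (gcd r₃ m₄)))) ∣ a :=
      dvd_trans (dvd_lcm_right _ _) h
    obtain ⟨f₂, hf2, e1⟩ := (key_step _ _ a).2 h2
    have g2 : m₂ ∣ f₂ := dvd_trans (dvd_lcm_left _ _) hf2
    obtain ⟨f₃, hf3, e2⟩ := (key_step _ _ f₂).2 (dvd_trans (dvd_lcm_right _ _) hf2)
    have g3 : m₃ ∣ f₃ := dvd_trans (dvd_lcm_left _ _) hf3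
    obtain ⟨f₄, hf4, e3⟩ := (key_step _ _ f₃).2 (dvd_trans (dvd_lcm_right _ _) hf3)
    exact ⟨a, f₂, f₃, f₄, rfl, h1, g2, g3, hf4, e1, e2, e3⟩
end

section
/- Extension of splines from a subgraph: let G' be a subgraph of an edge-labeled graph G over ℤ with vertex modules m_vℤ and edge labels r_e ∈ ℤ, and let F' be a spline on G'. Let a be the product of all edge labels r_{v_iv_j} over edges of G not in G' that have at least one endpoint in G'. Then the vertex labeling F defined by f_v = a·f'_v for v in G' and f_v = 0 for v not in G' is a spline on G. -/
/-- Extension of splines from a subgraph: given a spline `f'` on a subgraph `(S, E')` of `G`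
and `a` the product of labels of edges outside `E'` with an endpoint in `S`, the labeling
`F = a·f'` on `S` and `0` elsewhere is a spline on `G`. -/
theorem stmt_4 {V E : Type*} [Fintype E] [DecidableEq V] [DecidableEq E]
    (u v : E → V) (m : V → ℤ) (r : E → ℤ)
    (S : Finset V) (E' : Finset E)
    (hE' : ∀ e ∈ E', u e ∈ S ∧ v e ∈ S)
    (f' : V → ℤ)
    (hm : ∀ w ∈ S, m w ∣ f' w)
    (hr : ∀ e ∈ E', r e ∣ f' (u e) - f' (v e)) :
    let a : ℤ := ∏ e ∈ Finset.univ.filter (fun e => e ∉ E' ∧ (u e ∈ S ∨ v e ∈ S)), r e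
    let F : V → ℤ := fun w => if w ∈ S then a * f' w else 0
    (∀ w, m w ∣ F w) ∧ (∀ e, r e ∣ F (u e) - F (v e)) := by
  intro a F
  have ha : ∀ e, e ∉ E' → (u e ∈ S ∨ v e ∈ S) → r e ∣ a := by
    intro e he hS
    exact Finset.dvd_prod_of_mem r (by simp [he, hS])
  constructor
  · intro w
    by_cases hw : w ∈ S
    · simpa [F, hw] using (hm w hw).mul_left a
    · simp [F, hw]
  · intro e
    by_cases he : e ∈ E'
    · obtain ⟨h1, h2⟩ := hE' e he
      simpa [F, h1, h2, ← mul_sub] using (hr e he).mul_left a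
    · by_cases h1 : u e ∈ S <;> by_cases h2 : v e ∈ S <;>
        simp [F, h1, h2, ← mul_sub]
      · exact Dvd.dvd.mul_right (ha e he (Or.inl h1)) _
      · exact Dvd.dvd.mul_right (ha e he (Or.inl h1)) _
      · exact Dvd.dvd.mul_right (ha e he (Or.inr h2)) _
end

section
/- Vertex reduction yields a surjective spline homomorphism: let G be an edge-labeled graph over ℤ, v_i a vertex, and G_red the reduced graph associated to v_i (remove v_i and its incident edges labeled r_t to neighbors v_{i_t}; relabel each neighbor's vertex module as lcm(m_{v_{i_t}}, gcd(m_{v_i}, r_t))·ℤ; add between each pair of neighbors v_{i_t}, v_{i_u} a new edge labeled gcd(r_t, r_u), then merge multiple edges via lcm). Then the coordinate-deletion map ψ : R̂_G → R̂_{G_red} is a well-defined surjective ℤ-module homomorphism. -/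
/-!
Deleting the coordinate at `v₀` sends splines to splines: a neighbour `w` of `v₀` along an edge
`e` satisfies `f w ≡ f v₀ ≡ 0 (mod gcd (m v₀) (r e))`, and two neighbours `w₁, w₂` along `e₁, e₂`
agree modulo `gcd (r e₁) (r e₂)` because both agree with `f v₀`.

Conversely, a spline `g` on the reduced graph extends to `G` once a value `x` at `v₀` solves
`x ≡ 0 (mod m v₀)` and `x ≡ g w (mod r e)` for every edge `e` joining `v₀` to `w`. The conditions
defining the reduced graph are exactly the pairwise compatibility conditions of this system,
so the Chinese Remainder Theorem for non-coprime moduli provides `x`.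
-/

theorem Nat.gcd_lcm_dvd_lcm_gcd (a b c : ℕ) :
    Nat.gcd (Nat.lcm a b) c ∣ Nat.lcm (Nat.gcd a c) (Nat.gcd b c) := by
  rcases eq_or_ne a 0 with rfl | ha
  · simpa using Nat.dvd_lcm_left c (Nat.gcd b c)
  rcases eq_or_ne b 0 with rfl | hb
  · simpa using Nat.dvd_lcm_right (Nat.gcd a c) c
  rcases eq_or_ne c 0 with rfl | hc
  · simp
  have hac : Nat.gcd a c ≠ 0 := Nat.gcd_ne_zero_right hc
  have hbc : Nat.gcd b c ≠ 0 := Nat.gcd_ne_zero_right hc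
  rw [← Nat.factorization_le_iff_dvd (Nat.gcd_ne_zero_right hc) (Nat.lcm_ne_zero hac hbc),
    Nat.factorization_gcd (Nat.lcm_ne_zero ha hb) hc, Nat.factorization_lcm ha hb,
    Nat.factorization_lcm hac hbc, Nat.factorization_gcd ha hc, Nat.factorization_gcd hb hc]
  intro p
  simp only [Finsupp.inf_apply, Finsupp.sup_apply]
  omega

theorem gcd_lcm_dvd_lcm_gcd (a b c : ℤ) : gcd (lcm a b) c ∣ lcm (gcd a c) (gcd b c) := by
  rw [← Int.coe_gcd, ← Int.coe_lcm, ← Int.coe_gcd, ← Int.coe_gcd, ← Int.coe_lcm,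
    Int.natCast_dvd_natCast]
  simpa [Int.gcd, Int.lcm] using Nat.gcd_lcm_dvd_lcm_gcd a.natAbs b.natAbs c.natAbs

theorem gcd_finset_lcm_dvd {ι : Type*} (s : Finset ι) (n : ι → ℤ) (c z : ℤ)
    (h : ∀ i ∈ s, gcd (n i) c ∣ z) : gcd (s.lcm n) c ∣ z := by
  classical
  induction s using Finset.induction_on with
  | empty => simp
  | insert j s _ ih =>
    rw [Finset.lcm_insert]
    refine (gcd_lcm_dvd_lcm_gcd (n j) (s.lcm n) c).trans (lcm_dvd ?_ ?_)
    · exact h j (Finset.mem_insert_self j s)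
    · exact ih fun i hi => h i (Finset.mem_insert_of_mem hi)

theorem exists_dvd_sub_and_dvd_sub_of_gcd_dvd {n m a b : ℤ} (h : gcd n m ∣ a - b) :
    ∃ x : ℤ, n ∣ x - a ∧ m ∣ x - b := by
  obtain ⟨q, hq⟩ := h
  rw [← Int.coe_gcd, Int.gcd_eq_gcd_ab n m] at hq
  exact ⟨a - q * (n * Int.gcdA n m), ⟨-(q * Int.gcdA n m), by ring⟩,
    ⟨q * Int.gcdB n m, by linarith⟩⟩

theorem exists_forall_dvd_sub {ι : Type*} (s : Finset ι) (n a : ι → ℤ)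
    (h : ∀ i ∈ s, ∀ j ∈ s, gcd (n i) (n j) ∣ a i - a j) :
    ∃ x : ℤ, ∀ i ∈ s, n i ∣ x - a i := by
  classical
  induction s using Finset.induction_on with
  | empty => exact ⟨0, by simp⟩
  | insert j s _ ih =>
    obtain ⟨x, hx⟩ := ih fun i hi k hk =>
      h i (Finset.mem_insert_of_mem hi) k (Finset.mem_insert_of_mem hk)
    have hcompat : gcd (s.lcm n) (n j) ∣ x - a j := by
      refine gcd_finset_lcm_dvd s n (n j) _ fun i hi => ?_
      have hxi : gcd (n i) (n j) ∣ x - a i := (gcd_dvd_left _ _).trans (hx i hi)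
      simpa using dvd_add hxi (h i (Finset.mem_insert_of_mem hi) j (Finset.mem_insert_self j s))
    obtain ⟨y, hys, hyj⟩ := exists_dvd_sub_and_dvd_sub_of_gcd_dvd hcompat
    refine ⟨y, fun i hi => ?_⟩
    rcases Finset.mem_insert.mp hi with rfl | hi
    · exact hyj
    · simpa using dvd_add ((Finset.dvd_lcm hi).trans hys) (hx i hi)

theorem exists_forall_dvd_sub_of_finite {ι : Type*} [Finite ι] (n a : ι → ℤ)
    (h : ∀ i j, gcd (n i) (n j) ∣ a i - a j) : ∃ x : ℤ, ∀ i, n i ∣ x - a i := by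
  have := Fintype.ofFinite ι
  obtain ⟨x, hx⟩ := exists_forall_dvd_sub Finset.univ n a fun i _ j _ => h i j
  exact ⟨x, fun i => hx i (Finset.mem_univ i)⟩

namespace EdgeLabeledGraph

variable {V E : Type*} (u v : E → V)

def Joins (e : E) (a b : V) : Prop :=
  (u e = a ∧ v e = b) ∨ (v e = a ∧ u e = b)

variable {u v}

theorem Joins.eq_of_ne {e : E} {a b c : V} (hb : Joins u v e a b) (hc : Joins u v e a c)
    (hba : b ≠ a) : b = c := by
  unfold Joins at hb hc
  grind

theorem Joins.dvd_sub {r : E → ℤ} {f : V → ℤ} (hf : ∀ e, r e ∣ f (u e) - f (v e)) {e : E}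
    {a b : V} (h : Joins u v e a b) : r e ∣ f a - f b := by
  rcases h with ⟨rfl, rfl⟩ | ⟨rfl, rfl⟩
  · exact hf e
  · exact dvd_sub_comm.1 (hf e)

theorem exists_dvd_forall_joins [Finite E] (r : E → ℤ) {v₀ : V} (n₀ : ℤ)
    (g : {w : V // w ≠ v₀} → ℤ)
    (hbase : ∀ e w, Joins u v e v₀ w.1 → gcd n₀ (r e) ∣ g w)
    (hpair : ∀ e₁ e₂ (w₁ w₂ : {w : V // w ≠ v₀}), Joins u v e₁ v₀ w₁.1 →
      Joins u v e₂ v₀ w₂.1 → gcd (r e₁) (r e₂) ∣ g w₁ - g w₂) :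
    ∃ x, n₀ ∣ x ∧ ∀ e w, Joins u v e v₀ w.1 → r e ∣ x - g w := by
  -- One congruence per incidence `(e, w)`, and `x ≡ 0 (mod n₀)` at the index `none`.
  let ι := {p : E × {w : V // w ≠ v₀} // Joins u v p.1 v₀ p.2.1}
  have : Finite ι := Finite.of_injective (fun p : ι => p.1.1) fun p q hpq => by
    obtain ⟨⟨e, w₁⟩, h₁⟩ := p
    obtain ⟨⟨_, w₂⟩, h₂⟩ := q
    obtain rfl : e = _ := hpq
    obtain rfl : w₁ = w₂ := Subtype.ext (h₁.eq_of_ne h₂ w₁.2)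
    rfl
  obtain ⟨x, hx⟩ := exists_forall_dvd_sub_of_finite (ι := Option ι)
    (fun i => i.elim n₀ fun p => r p.1.1) (fun i => i.elim 0 fun p => g p.1.2) <| by
      rintro (_ | ⟨⟨e₁, w₁⟩, h₁⟩) (_ | ⟨⟨e₂, w₂⟩, h₂⟩)
      · simp
      · simpa using hbase e₂ w₂ h₂
      · simpa [gcd_comm] using hbase e₁ w₁ h₁
      · exact hpair e₁ e₂ w₁ w₂ h₁ h₂
  exact ⟨x, by simpa using hx none, fun e w h => hx (some ⟨(e, w), h⟩)⟩

variable [DecidableEq V]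

def extendAt {α : Type*} (v₀ : V) (g : {w : V // w ≠ v₀} → α) (x : α) : V → α :=
  fun w => if h : w = v₀ then x else g ⟨w, h⟩

@[simp]
theorem extendAt_self {α : Type*} {v₀ : V} (g : {w : V // w ≠ v₀} → α) (x : α) :
    extendAt v₀ g x v₀ = x := by
  simp [extendAt]

@[simp]
theorem extendAt_of_ne {α : Type*} {v₀ w : V} (g : {w : V // w ≠ v₀} → α) (x : α)
    (h : w ≠ v₀) : extendAt v₀ g x w = g ⟨w, h⟩ := by
  simp [extendAt, h]

theorem dvd_extendAt_sub {r : E → ℤ} {v₀ : V} {g : {w : V // w ≠ v₀} → ℤ} {x : ℤ}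
    (hg : ∀ e (hu : u e ≠ v₀) (hv : v e ≠ v₀), r e ∣ g ⟨u e, hu⟩ - g ⟨v e, hv⟩)
    (hx : ∀ e w, Joins u v e v₀ w.1 → r e ∣ x - g w) (e : E) :
    r e ∣ extendAt v₀ g x (u e) - extendAt v₀ g x (v e) := by
  by_cases hu : u e = v₀ <;> by_cases hv : v e = v₀
  · simp [hu, hv]
  · simpa [hu, hv] using hx e ⟨v e, hv⟩ (Or.inl ⟨hu, rfl⟩)
  · simpa [hu, hv] using dvd_sub_comm.1 (hx e ⟨u e, hu⟩ (Or.inr ⟨hv, rfl⟩))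
  · simpa [hu, hv] using hg e hu hv

end EdgeLabeledGraph

open EdgeLabeledGraph in
theorem stmt_12_general {V E : Type*} [Fintype E] [DecidableEq V]
    (u v : E → V) (m : V → ℤ) (r : E → ℤ) (v₀ : V)
    (m' : {w : V // w ≠ v₀} → ℤ)
    (hm' : ∀ w : {w : V // w ≠ v₀}, m' w = lcm (m w.1)
      ((Finset.univ.filter
        (fun e => (u e = v₀ ∧ v e = w.1) ∨ (v e = v₀ ∧ u e = w.1))).lcm
        (fun e => gcd (m v₀) (r e))))
    (SG : Set (V → ℤ)) (Sred : Set ({w : V // w ≠ v₀} → ℤ))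
    (hSG : ∀ f, f ∈ SG ↔ ((∀ w, m w ∣ f w) ∧ ∀ e, r e ∣ f (u e) - f (v e)))
    (hSred : ∀ g, g ∈ Sred ↔ ((∀ w, m' w ∣ g w) ∧
      (∀ e, ∀ (hu : u e ≠ v₀) (hv : v e ≠ v₀), r e ∣ g ⟨u e, hu⟩ - g ⟨v e, hv⟩) ∧
      (∀ e₁ e₂ (w₁ w₂ : {w : V // w ≠ v₀}),
        ((u e₁ = v₀ ∧ v e₁ = w₁.1) ∨ (v e₁ = v₀ ∧ u e₁ = w₁.1)) →
        ((u e₂ = v₀ ∧ v e₂ = w₂.1) ∨ (v e₂ = v₀ ∧ u e₂ = w₂.1)) →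
        gcd (r e₁) (r e₂) ∣ g w₁ - g w₂))) :
    (∀ f ∈ SG, (fun w : {w : V // w ≠ v₀} => f w.1) ∈ Sred) ∧
    (∀ g ∈ Sred, ∃ f ∈ SG, ∀ w : {w : V // w ≠ v₀}, f w.1 = g w) := by
  have gcd_dvd_m' : ∀ e w, Joins u v e v₀ w.1 → gcd (m v₀) (r e) ∣ m' w := fun e w h => by
    rw [hm' w]
    exact (Finset.dvd_lcm (Finset.mem_filter.2 ⟨Finset.mem_univ e, h⟩)).trans
      (dvd_lcm_right _ _)
  refine ⟨fun f hf => ?_, fun g hg => ?_⟩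
  · obtain ⟨hfm, hfr⟩ := (hSG f).1 hf
    refine (hSred _).2 ⟨fun w => ?_, fun e _ _ => hfr e, fun e₁ e₂ w₁ w₂ h₁ h₂ => ?_⟩
    · rw [hm' w]
      refine lcm_dvd (hfm w) (Finset.lcm_dvd fun e he => ?_)
      exact (dvd_sub_right ((gcd_dvd_left _ _).trans (hfm v₀))).1
        ((gcd_dvd_right _ _).trans (Joins.dvd_sub hfr (Finset.mem_filter.1 he).2))
    · have h := dvd_sub ((gcd_dvd_right _ _).trans (Joins.dvd_sub hfr h₂))
        ((gcd_dvd_left _ _).trans (Joins.dvd_sub hfr h₁))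
      rwa [sub_sub_sub_cancel_left] at h
  · obtain ⟨hgm, hgr, hgpair⟩ := (hSred g).1 hg
    obtain ⟨x, hx₀, hx⟩ := exists_dvd_forall_joins r (m v₀) g
      (fun e w h => (gcd_dvd_m' e w h).trans (hgm w)) hgpair
    refine ⟨extendAt v₀ g x, (hSG _).2 ⟨fun w => ?_, dvd_extendAt_sub hgr hx⟩,
      fun w => extendAt_of_ne g x w.2⟩
    by_cases hw : w = v₀
    · simpa [hw] using hx₀
    · rw [extendAt_of_ne g x hw]
      exact (hm' ⟨w, hw⟩ ▸ dvd_lcm_left _ _ : m w ∣ m' ⟨w, hw⟩).trans (hgm _)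

/-- Vertex reduction yields a well-defined surjective map of spline sets: deleting the
coordinate at `v₀`, after relabeling each neighbor `w` by
`lcm(m_w, gcd(m_{v₀}, r_e))` over incident edges and adding edges labeled
`gcd(r_{e₁}, r_{e₂})` between neighbors (with multiple edges merged). -/
theorem stmt_12 {V E : Type*} [Fintype E] [DecidableEq V] [DecidableEq E]
    (u v : E → V) (m : V → ℤ) (r : E → ℤ) (v₀ : V)
    (m' : {w : V // w ≠ v₀} → ℤ)
    (hm' : ∀ w : {w : V // w ≠ v₀}, m' w = lcm (m w.1)
      ((Finset.univ.filter
        (fun e => (u e = v₀ ∧ v e = w.1) ∨ (v e = v₀ ∧ u e = w.1))).lcm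
        (fun e => gcd (m v₀) (r e))))
    (SG : Set (V → ℤ)) (Sred : Set ({w : V // w ≠ v₀} → ℤ))
    (hSG : ∀ f, f ∈ SG ↔ ((∀ w, m w ∣ f w) ∧ ∀ e, r e ∣ f (u e) - f (v e)))
    (hSred : ∀ g, g ∈ Sred ↔ ((∀ w, m' w ∣ g w) ∧
      (∀ e, ∀ (hu : u e ≠ v₀) (hv : v e ≠ v₀), r e ∣ g ⟨u e, hu⟩ - g ⟨v e, hv⟩) ∧
      (∀ e₁ e₂ (w₁ w₂ : {w : V // w ≠ v₀}),
        ((u e₁ = v₀ ∧ v e₁ = w₁.1) ∨ (v e₁ = v₀ ∧ u e₁ = w₁.1)) →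
        ((u e₂ = v₀ ∧ v e₂ = w₂.1) ∨ (v e₂ = v₀ ∧ u e₂ = w₂.1)) →
        gcd (r e₁) (r e₂) ∣ g w₁ - g w₂))) :
    (∀ f ∈ SG, (fun w : {w : V // w ≠ v₀} => f w.1) ∈ Sred) ∧
    (∀ g ∈ Sred, ∃ f ∈ SG, ∀ w : {w : V // w ≠ v₀}, f w.1 = g w) :=
  stmt_12_general u v m r v₀ m' hm' SG Sred hSG hSred
end

section
/- Zero vertex reduction: let G be an edge-labeled graph over ℤ and v_i a vertex; let G_zred be the graph obtained by deleting v_i and its incident edges and relabeling each neighbor v_{i_t} with vertex module lcm(m_{v_{i_t}}, r_{v_iv_{i_t}})·ℤ. Then a tuple with f_{v_i} = 0 satisfies (f_{v₁},…,0,…,f_{vₙ}) ∈ R̂_G if and only if (f_{v₁},…,f_{v_{i−1}},f_{v_{i+1}},…,f_{vₙ}) ∈ R̂_{G_zred}. -/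
/-- Zero vertex reduction: a tuple with `f v₀ = 0` is a spline on `G` iff its restriction
is a spline on the graph with `v₀` deleted and each neighbor `w` relabeled by
`lcm(m_w, r_e)` over the incident edges. -/
theorem stmt_14 {V E : Type*} [Fintype E] [DecidableEq V] [DecidableEq E]
    (u v : E → V) (m : V → ℤ) (r : E → ℤ) (v₀ : V)
    (f : V → ℤ) (hf0 : f v₀ = 0) :
    ((∀ w, m w ∣ f w) ∧ ∀ e, r e ∣ f (u e) - f (v e)) ↔
    ((∀ w : {w : V // w ≠ v₀}, lcm (m w.1)
        ((Finset.univ.filter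
          (fun e => (u e = v₀ ∧ v e = w.1) ∨ (v e = v₀ ∧ u e = w.1))).lcm r) ∣ f w.1) ∧
     ∀ e, u e ≠ v₀ → v e ≠ v₀ → r e ∣ f (u e) - f (v e)) := by
  constructor
  · rintro ⟨hm, hr⟩
    refine ⟨fun w => lcm_dvd (hm w.1) (Finset.lcm_dvd ?_), fun e _ _ => hr e⟩
    intro e he
    simp only [Finset.mem_filter, Finset.mem_univ, true_and] at he
    rcases he with ⟨hu, hv⟩ | ⟨hv, hu⟩
    · have := hr e
      rw [hu, hv, hf0] at this
      simpa using this.neg_right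
    · have := hr e
      rw [hu, hv, hf0, sub_zero] at this
      exact this
  · rintro ⟨hm, hr⟩
    constructor
    · intro w
      by_cases hw : w = v₀
      · rw [hw, hf0]; exact dvd_zero _
      · exact dvd_trans (dvd_lcm_left _ _) (hm ⟨w, hw⟩)
    · intro e
      by_cases hu : u e = v₀
      · by_cases hv : v e = v₀
        · rw [hu, hv, sub_self]; exact dvd_zero _
        · have hmem : e ∈ Finset.univ.filter
              (fun e' => (u e' = v₀ ∧ v e' = v e) ∨ (v e' = v₀ ∧ u e' = v e)) := by
            simp [hu]
          have : r e ∣ f (v e) :=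
            dvd_trans (Finset.dvd_lcm hmem) (dvd_trans (dvd_lcm_right _ _) (hm ⟨v e, hv⟩))
          rw [hu, hf0, zero_sub]
          exact this.neg_right
      · by_cases hv : v e = v₀
        · have hmem : e ∈ Finset.univ.filter
              (fun e' => (u e' = v₀ ∧ v e' = u e) ∨ (v e' = v₀ ∧ u e' = u e)) := by
            simp [hv]
          have : r e ∣ f (u e) :=
            dvd_trans (Finset.dvd_lcm hmem) (dvd_trans (dvd_lcm_right _ _) (hm ⟨u e, hu⟩))
          rw [hv, hf0, sub_zero]
          exact this
        · exact hr e hu hv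
end

section
/- Minimality of leading term is preserved under graph reduction: with ψ : R̂_G → R̂_{G_red} the reduction map that deletes the coordinates at the reduced vertices v_{i+1},…,vₙ, a flow-up class F⁽ⁱ⁾ = (0,…,0,f_{v_i},…,f_{vₙ}) ∈ R̂_G (with f_{v_i} ≠ 0) has minimal leading term among all i-th flow-up classes of R̂_G if and only if ψ(F⁽ⁱ⁾) = (0,…,0,f_{v_i}) has minimal leading term among i-th flow-up classes of R̂_{G_red}. In particular, the minimal leading term f_{v_i} is invariant under graph reduction. -/
/-- Minimality of the leading term is preserved under graph reduction: for the surjective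
coordinate-deletion map from the spline set `SG` onto the reduced spline set `Sred`
(keeping the first `k+1` coordinates), a flow-up class `F` at position `k` has minimal
leading term in `SG` iff its image has minimal leading term in `Sred`. -/
theorem stmt_16 (n k : ℕ) (h : k + 1 ≤ n)
    (SG : Set (Fin n → ℤ)) (Sred : Set (Fin (k + 1) → ℤ))
    (hmap : ∀ f ∈ SG, (fun j : Fin (k + 1) => f (Fin.castLE h j)) ∈ Sred)
    (hsurj : ∀ g ∈ Sred, ∃ f ∈ SG, (fun j : Fin (k + 1) => f (Fin.castLE h j)) = g)
    (F : Fin n → ℤ) (hF : F ∈ SG)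
    (hz : ∀ j : Fin n, j.val < k → F j = 0) (hnz : F ⟨k, h⟩ ≠ 0) :
    (∀ G ∈ SG, (∀ j : Fin n, j.val < k → G j = 0) → F ⟨k, h⟩ ∣ G ⟨k, h⟩) ↔
    (∀ g ∈ Sred, (∀ j : Fin (k + 1), j.val < k → g j = 0) →
      F ⟨k, h⟩ ∣ g (Fin.last k)) := by
  constructor
  · intro H g hg hgz
    obtain ⟨f, hf, hfg⟩ := hsurj g hg
    have hdvd := H f hf (fun j hj => by
      have : f (Fin.castLE h ⟨j.val, Nat.lt_succ_of_lt hj⟩) = g ⟨j.val, Nat.lt_succ_of_lt hj⟩ :=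
        congrFun hfg _
      simpa [Fin.castLE] using this.trans (hgz _ hj))
    have : f ⟨k, h⟩ = g (Fin.last k) := by
      have := congrFun hfg (Fin.last k)
      simpa [Fin.castLE, Fin.last] using this
    rwa [← this]
  · intro H G hG hGz
    have hdvd := H _ (hmap G hG) (fun j hj => hGz _ (by simpa [Fin.castLE] using hj))
    simpa [Fin.castLE, Fin.last] using hdvd
end
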